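/- Let U be a VLA-J-SS over ℂ. Then the full half Jacobi identity holds, i.e. for all u,v,w ∈ U and all k,m,n ∈ ℕ: Σ_{i≥0} (−1)^i·binom(k,i)·( u_{m+k−i}(v_{n+i}w) − (−1)^k·v_{n+k−i}(u_{m+i}w) ) = Σ_{i≥0} binom(m,i)·( (u_{k+i}v)_{m+n−i} w ), if and only if the half associator formula holds, i.e. for all u,v,w ∈ U and all k,n ∈ ℕ: (u_kv)_nw = Σ_{i≥0} (−1)^i·binom(k,i)·( u_{k−i}(v_{n+i}w) − (−1)^k·v_{n+k−i}(u_iw) ) (which is the case m = 0 of the half Jacobi identity). -/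
import Mathlib


open scoped BigOperators

noncomputable section

/-- A VLA-J-SS over `ℂ`: a vector space `U` with a derivation `D` and bilinear products
`mul n` for `n : ℕ`, satisfying truncation and the `D`-compatibility relations (but not
necessarily the half Jacobi identity or half skew symmetry). -/
structure VLAJSS (U : Type*) [AddCommGroup U] [Module ℂ U] where
  D : U →ₗ[ℂ] U
  mul : ℕ → U →ₗ[ℂ] U →ₗ[ℂ] U
  trunc : ∀ u v : U, ∃ N : ℕ, ∀ n : ℕ, N ≤ n → mul n u v = 0
  dLeft : ∀ (n : ℕ) (u v : U), mul (n + 1) (D u) v = (-((n : ℂ) + 1)) • mul n u v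
  dLeftZero : ∀ u v : U, mul 0 (D u) v = 0
  leibniz : ∀ (n : ℕ) (u v : U), D (mul n u v) = mul n (D u) v + mul n u (D v)

variable {U : Type*} [AddCommGroup U] [Module ℂ U]

/-- The half Jacobi identity for a VLA-J-SS. -/
def HalfJacobi (A : VLAJSS U) : Prop :=
  ∀ (k m n : ℕ) (u v w : U),
    ∑ᶠ i : ℕ, ((-1 : ℂ) ^ i * (Nat.choose k i : ℂ)) •
        (A.mul (m + k - i) u (A.mul (n + i) v w)
          - ((-1 : ℂ) ^ k) • A.mul (n + k - i) v (A.mul (m + i) u w))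
      = ∑ᶠ i : ℕ, ((Nat.choose m i : ℂ)) • A.mul (m + n - i) (A.mul (k + i) u v) w


/-- The half associator formula (the case `m = 0` of the half Jacobi identity). -/
def HalfAssociator (A : VLAJSS U) : Prop :=
  ∀ (k n : ℕ) (u v w : U),
    A.mul n (A.mul k u v) w
      = ∑ᶠ i : ℕ, ((-1 : ℂ) ^ i * (Nat.choose k i : ℂ)) •
          (A.mul (k - i) u (A.mul (n + i) v w)
            - ((-1 : ℂ) ^ k) • A.mul (n + k - i) v (A.mul i u w))

/- ### Auxiliary material -/

/-- Convert a finsum whose terms vanish beyond `N` into a finite sum. -/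
lemma finsum_to_range {V : Type*} [AddCommMonoid V] (f : ℕ → V) (N : ℕ)
    (h : ∀ i, N < i → f i = 0) :
    ∑ᶠ i : ℕ, f i = ∑ i ∈ Finset.range (N + 1), f i := by
  apply finsum_eq_sum_of_support_subset
  intro i hi
  simp only [Function.mem_support] at hi
  simp only [Finset.coe_range, Set.mem_Iio]
  by_contra hc
  exact hi (h i (by omega))

/-- The left-hand side of the half Jacobi identity, as a finite sum. -/
def Lsum (A : VLAJSS U) (u v w : U) (k m n : ℕ) : U :=
  ∑ i ∈ Finset.range (k + 1), ((-1 : ℂ) ^ i * (Nat.choose k i : ℂ)) •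
      (A.mul (m + k - i) u (A.mul (n + i) v w)
        - ((-1 : ℂ) ^ k) • A.mul (n + k - i) v (A.mul (m + i) u w))

/-- The right-hand side of the half Jacobi identity, as a finite sum. -/
def Rsum (A : VLAJSS U) (u v w : U) (k m n : ℕ) : U :=
  ∑ i ∈ Finset.range (m + 1), ((Nat.choose m i : ℂ)) •
      A.mul (m + n - i) (A.mul (k + i) u v) w

lemma hj_lhs_eq (A : VLAJSS U) (u v w : U) (k m n : ℕ) :
    (∑ᶠ i : ℕ, ((-1 : ℂ) ^ i * (Nat.choose k i : ℂ)) •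
        (A.mul (m + k - i) u (A.mul (n + i) v w)
          - ((-1 : ℂ) ^ k) • A.mul (n + k - i) v (A.mul (m + i) u w)))
      = Lsum A u v w k m n := by
  apply finsum_to_range
  intro i hi
  rw [Nat.choose_eq_zero_of_lt (by omega)]
  simp

lemma hj_rhs_eq (A : VLAJSS U) (u v w : U) (k m n : ℕ) :
    (∑ᶠ i : ℕ, ((Nat.choose m i : ℂ)) • A.mul (m + n - i) (A.mul (k + i) u v) w)
      = Rsum A u v w k m n := by
  apply finsum_to_range
  intro i hi
  rw [Nat.choose_eq_zero_of_lt (by omega)]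
  simp

/-- Generic Pascal-type rearrangement used for the left-hand side. -/
lemma pascalA_aux (k m n : ℕ) (f : ℕ → ℕ → U) :
    ∑ i ∈ Finset.range (k + 2), ((-1 : ℂ) ^ i * ((k+1).choose i : ℂ)) •
        f (m + (k+1) - i) (n + i)
      = (∑ i ∈ Finset.range (k + 1), ((-1 : ℂ) ^ i * (k.choose i : ℂ)) •
          f (m + 1 + k - i) (n + i))
        - ∑ i ∈ Finset.range (k + 1), ((-1 : ℂ) ^ i * (k.choose i : ℂ)) •
          f (m + k - i) (n + 1 + i) := by
  rw [Finset.sum_range_succ']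
  have hsplit : ∀ i ∈ Finset.range (k + 1),
      ((-1 : ℂ) ^ (i+1) * ((k+1).choose (i+1) : ℂ)) • f (m + (k+1) - (i+1)) (n + (i+1))
        = ((-1 : ℂ) ^ (i+1) * (k.choose (i+1) : ℂ)) • f (m + k - i) (n + i + 1)
          - ((-1 : ℂ) ^ i * (k.choose i : ℂ)) • f (m + k - i) (n + i + 1) := by
    intro i _
    have h1 : m + (k+1) - (i+1) = m + k - i := by omega
    have h1' : n + (i+1) = n + i + 1 := by omega
    rw [h1, h1', Nat.choose_succ_succ]
    simp only [Nat.succ_eq_add_one]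
    push_cast
    module
  rw [Finset.sum_congr rfl hsplit, Finset.sum_sub_distrib]
  have h2 : ∑ i ∈ Finset.range (k + 1),
      ((-1 : ℂ) ^ (i+1) * (k.choose (i+1) : ℂ)) • f (m + k - i) (n + i + 1)
      = ∑ i ∈ Finset.range k,
      ((-1 : ℂ) ^ (i+1) * (k.choose (i+1) : ℂ)) • f (m + k - i) (n + i + 1) := by
    rw [Finset.sum_range_succ, Nat.choose_succ_self]
    simp
  rw [h2]
  have h3 : (∑ i ∈ Finset.range (k + 1), ((-1 : ℂ) ^ i * (k.choose i : ℂ)) •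
      f (m + 1 + k - i) (n + i))
      = (∑ i ∈ Finset.range k,
        ((-1 : ℂ) ^ (i+1) * (k.choose (i+1) : ℂ)) • f (m + k - i) (n + i + 1))
        + ((-1 : ℂ) ^ 0 * ((k+1).choose 0 : ℂ)) • f (m + (k+1) - 0) (n + 0) := by
    rw [Finset.sum_range_succ']
    congr 1
    · apply Finset.sum_congr rfl
      intro i _
      congr 2
      omega
    · norm_num
      congr 1
      omega
  rw [h3]
  have h4 : ∑ i ∈ Finset.range (k + 1), ((-1 : ℂ) ^ i * (k.choose i : ℂ)) •
      f (m + k - i) (n + 1 + i)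
      = ∑ i ∈ Finset.range (k + 1), ((-1 : ℂ) ^ i * (k.choose i : ℂ)) •
      f (m + k - i) (n + i + 1) := by
    apply Finset.sum_congr rfl
    intro i _
    congr 2
    omega
  rw [h4]
  abel

/-- Generic Pascal-type rearrangement used for the right-hand side. -/
lemma pascalR_aux (m n : ℕ) (h : ℕ → ℕ → U) :
    ∑ i ∈ Finset.range (m + 2), (((m+1).choose i : ℂ)) • h i (m + 1 + n - i)
      = (∑ i ∈ Finset.range (m + 1), ((m.choose i : ℂ)) • h i (m + (n+1) - i))
        + ∑ i ∈ Finset.range (m + 1), ((m.choose i : ℂ)) • h (i+1) (m + n - i) := by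
  rw [Finset.sum_range_succ']
  have hsplit : ∀ i ∈ Finset.range (m + 1),
      (((m+1).choose (i+1) : ℂ)) • h (i+1) (m + 1 + n - (i+1))
        = ((m.choose (i+1) : ℂ)) • h (i+1) (m + n - i)
          + ((m.choose i : ℂ)) • h (i+1) (m + n - i) := by
    intro i _
    have h1 : m + 1 + n - (i+1) = m + n - i := by omega
    rw [h1, Nat.choose_succ_succ]
    simp only [Nat.succ_eq_add_one]
    push_cast
    module
  rw [Finset.sum_congr rfl hsplit, Finset.sum_add_distrib]
  have h2 : ∑ i ∈ Finset.range (m + 1), ((m.choose (i+1) : ℂ)) • h (i+1) (m + n - i)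
      = ∑ i ∈ Finset.range m, ((m.choose (i+1) : ℂ)) • h (i+1) (m + n - i) := by
    rw [Finset.sum_range_succ, Nat.choose_succ_self]
    simp
  rw [h2]
  have h3 : (∑ i ∈ Finset.range (m + 1), ((m.choose i : ℂ)) • h i (m + (n+1) - i))
      = (∑ i ∈ Finset.range m, ((m.choose (i+1) : ℂ)) • h (i+1) (m + n - i))
        + (((m+1).choose 0 : ℂ)) • h 0 (m + 1 + n - 0) := by
    rw [Finset.sum_range_succ']
    congr 1
    · apply Finset.sum_congr rfl
      intro i _
      congr 2
      omega
    · norm_num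
      congr 1
      omega
  rw [h3]
  abel

lemma Lsum_pascal (A : VLAJSS U) (u v w : U) (k m n : ℕ) :
    Lsum A u v w k (m+1) n = Lsum A u v w k m (n+1) + Lsum A u v w (k+1) m n := by
  have hSA := pascalA_aux (U := U) k m n (fun a b => A.mul a u (A.mul b v w))
  have hSB := pascalA_aux (U := U) k n m (fun a b => A.mul a v (A.mul b u w))
  -- split each Lsum into its two parts
  have expand : ∀ K M N : ℕ,
      Lsum A u v w K M N
        = (∑ i ∈ Finset.range (K + 1), ((-1 : ℂ) ^ i * (K.choose i : ℂ)) •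
            A.mul (M + K - i) u (A.mul (N + i) v w))
          - ((-1 : ℂ) ^ K) • ∑ i ∈ Finset.range (K + 1),
            ((-1 : ℂ) ^ i * (K.choose i : ℂ)) • A.mul (N + K - i) v (A.mul (M + i) u w) := by
    intro K M N
    rw [Lsum, Finset.smul_sum, ← Finset.sum_sub_distrib]
    apply Finset.sum_congr rfl
    intro i _
    rw [smul_sub, smul_comm ((-1:ℂ)^K)]
  rw [expand, expand, expand]
  rw [hSA, hSB]
  have hsgn : ((-1 : ℂ) ^ (k+1)) = -((-1:ℂ)^k) := by ring
  rw [hsgn]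
  -- fix index normal forms: the SB sums from hSB have shape f (n+1+k-i) (m+i) etc.
  have e1 : ∀ i ∈ Finset.range (k+1),
      ((-1 : ℂ) ^ i * (k.choose i : ℂ)) • A.mul ((n+1) + k - i) v (A.mul (m + i) u w)
        = ((-1 : ℂ) ^ i * (k.choose i : ℂ)) • A.mul (n + 1 + k - i) v (A.mul (m + i) u w) :=
    fun i _ => rfl
  have e2 : ∀ i ∈ Finset.range (k+1),
      ((-1 : ℂ) ^ i * (k.choose i : ℂ)) • A.mul (n + k - i) v (A.mul ((m+1) + i) u w)
        = ((-1 : ℂ) ^ i * (k.choose i : ℂ)) • A.mul (n + k - i) v (A.mul (m + 1 + i) u w) :=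
    fun i _ => rfl
  rw [Finset.sum_congr rfl e1, Finset.sum_congr rfl e2] at *
  module

lemma Rsum_pascal (A : VLAJSS U) (u v w : U) (k m n : ℕ) :
    Rsum A u v w k (m+1) n = Rsum A u v w k m (n+1) + Rsum A u v w (k+1) m n := by
  have hR := pascalR_aux (U := U) m n (fun a b => A.mul b (A.mul (k + a) u v) w)
  rw [Rsum, Rsum, Rsum]
  rw [hR]
  congr 1
  apply Finset.sum_congr rfl
  intro i _
  have h5 : k + (i + 1) = k + 1 + i := by omega
  rw [h5]

theorem stmt9_aux (A : VLAJSS U)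
    (h0 : ∀ (k n : ℕ) (u v w : U), Lsum A u v w k 0 n = Rsum A u v w k 0 n) :
    ∀ (m k n : ℕ) (u v w : U), Lsum A u v w k m n = Rsum A u v w k m n := by
  intro m
  induction m with
  | zero => exact fun k n u v w => h0 k n u v w
  | succ m ih =>
    intro k n u v w
    rw [Lsum_pascal, Rsum_pascal, ih, ih]

lemma Rsum_zero (A : VLAJSS U) (u v w : U) (k n : ℕ) :
    Rsum A u v w k 0 n = A.mul n (A.mul k u v) w := by
  simp [Rsum]

lemma HA_iff (A : VLAJSS U) :
    HalfAssociator A ↔ ∀ (k n : ℕ) (u v w : U),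
      Lsum A u v w k 0 n = Rsum A u v w k 0 n := by
  constructor
  · intro h k n u v w
    rw [Rsum_zero, h k n u v w, ← hj_lhs_eq A u v w k 0 n]
    apply finsum_congr
    intro i
    simp
  · intro h k n u v w
    rw [← Rsum_zero A u v w k n, ← h k n u v w, ← hj_lhs_eq A u v w k 0 n]
    apply finsum_congr
    intro i
    simp

/-- for a VLA-J-SS, the half Jacobi identity holds if and only if the half
associator formula holds. -/
theorem stmt9 (A : VLAJSS U) : HalfJacobi A ↔ HalfAssociator A := by
  rw [HA_iff]
  constructor
  · intro h k n u v w
    have := h k 0 n u v w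
    rw [hj_lhs_eq, hj_rhs_eq] at this
    exact this
  · intro h k m n u v w
    rw [hj_lhs_eq, hj_rhs_eq]
    exact stmt9_aux A (fun k n u v w => h k n u v w) m k n u v w

end
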